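/- arXiv:1706.02602 — 5 statements merged into one kernel-verified Lean document; each statement's English description precedes it below -/
import Mathlib

section
/- Suppose strong duality holds for the problem min { g(x) : x ∈ argmin f }, where f(x) = (1/2)‖Ax − b‖², i.e., there exists a saddle point (x*, u*) of (x,u) ↦ g(x) + ⟨u, AᵀA x − Aᵀ b⟩. Then for all x ∈ ℝ^n, g(x) − g_* ≥ −‖Au*‖·√(2(f(x) − f_*)), where g_* = g(x*) and f_* = min f. -/
/-!
At a minimizer `x*` of `f`, the residual `A x* - b` is orthogonal to the range of `A`, so
Pythagoras gives `2 (f x - f x*) = ‖A (x - x*)‖²`. The subgradient inequality for `-AᵀA u*`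
bounds `g x - g x*` below by `-⟪A u*, A (x - x*)⟫`, and Cauchy–Schwarz finishes.
-/

open RealInnerProductSpace

section LeastSquares

variable {E F : Type*} [NormedAddCommGroup E] [InnerProductSpace ℝ E]
  [NormedAddCommGroup F] [InnerProductSpace ℝ F]

theorem real_inner_eq_zero_of_forall_norm_le_norm_add_smul {c w : F}
    (h : ∀ t : ℝ, ‖c‖ ≤ ‖c + t • w‖) : ⟪c, w⟫ = 0 := by
  have hmin : IsLocalMin (fun t : ℝ ↦ ‖c + t • w‖ ^ 2) 0 :=
    Filter.Eventually.of_forall fun t ↦ by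
      simpa using pow_le_pow_left₀ (norm_nonneg c) (h t) 2
  have hderiv : HasDerivAt (fun t : ℝ ↦ ‖c + t • w‖ ^ 2) (2 * ⟪c + (0 : ℝ) • w, w⟫) 0 :=
    (((hasDerivAt_id (0 : ℝ)).smul_const w).const_add c).norm_sq.congr_deriv (by simp)
  simpa using hmin.hasDerivAt_eq_zero hderiv

theorem real_inner_residual_map_eq_zero_of_forall_norm_le (A : E →ₗ[ℝ] F) {b : F} {x₀ : E}
    (hmin : ∀ y, ‖A x₀ - b‖ ≤ ‖A y - b‖) (v : E) : ⟪A x₀ - b, A v⟫ = 0 :=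
  real_inner_eq_zero_of_forall_norm_le_norm_add_smul fun t ↦ by
    simpa [map_add, map_smul, sub_add_eq_add_sub] using hmin (x₀ + t • v)

theorem norm_residual_sq_eq_of_forall_norm_le (A : E →ₗ[ℝ] F) {b : F} {x₀ : E}
    (hmin : ∀ y, ‖A x₀ - b‖ ≤ ‖A y - b‖) (x : E) :
    ‖A x - b‖ ^ 2 = ‖A x₀ - b‖ ^ 2 + ‖A (x - x₀)‖ ^ 2 := by
  have hsplit : A x - b = (A x₀ - b) + A (x - x₀) := by rw [map_sub]; abel
  rw [hsplit, norm_add_sq_real, real_inner_residual_map_eq_zero_of_forall_norm_le A hmin,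
    mul_zero, add_zero]

end LeastSquares

theorem stmt5_general (n m : ℕ)
    (A : EuclideanSpace ℝ (Fin n) →L[ℝ] EuclideanSpace ℝ (Fin m))
    (b : EuclideanSpace ℝ (Fin m))
    (g : EuclideanSpace ℝ (Fin n) → ℝ)
    (f : EuclideanSpace ℝ (Fin n) → ℝ)
    (hf : ∀ x, f x = (1/2) * ‖A x - b‖ ^ 2)
    (xstar ustar : EuclideanSpace ℝ (Fin n))
    (hxstar_min : ∀ y, f xstar ≤ f y)
    (hsubgrad : ∀ x, g x ≥ g xstar +
      (inner ℝ (-(ContinuousLinearMap.adjoint A (A ustar))) (x - xstar) : ℝ)) :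
    ∀ x, g x - g xstar ≥ -‖A ustar‖ * Real.sqrt (2 * (f x - f xstar)) := by
  intro x
  have hmin : ∀ y, ‖A xstar - b‖ ≤ ‖A y - b‖ := fun y ↦
    (pow_le_pow_iff_left₀ (norm_nonneg _) (norm_nonneg _) two_ne_zero).mp
      (by linarith [hxstar_min y, hf y, hf xstar])
  have hgap : Real.sqrt (2 * (f x - f xstar)) = ‖A (x - xstar)‖ := by
    have hpyth : ‖A x - b‖ ^ 2 = ‖A xstar - b‖ ^ 2 + ‖A (x - xstar)‖ ^ 2 :=
      norm_residual_sq_eq_of_forall_norm_le A.toLinearMap (b := b) hmin x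
    rw [hf, hf, hpyth]
    convert Real.sqrt_sq (norm_nonneg (A (x - xstar))) using 2
    ring
  have hsub : g x - g xstar ≥ -⟪A ustar, A (x - xstar)⟫ := by
    have := hsubgrad x
    rw [inner_neg_left, ContinuousLinearMap.adjoint_inner_left] at this
    linarith
  rw [hgap]
  linarith [real_inner_le_norm (A ustar) (A (x - xstar))]

/-- Estimate (3.8): if `(x*, u*)` is a saddle point of
`(x,u) ↦ g(x) + ⟨u, AᵀAx − Aᵀb⟩` (i.e. `x*` minimizes `f` and
`−AᵀAu*` is a subgradient of `g` at `x*`), then for all `x`,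
`g(x) − g_* ≥ −‖Au*‖·√(2(f(x) − f_*))` with `g_* = g(x*)`, `f_* = f(x*) = min f`. -/
theorem stmt5 (n m : ℕ)
    (A : EuclideanSpace ℝ (Fin n) →L[ℝ] EuclideanSpace ℝ (Fin m))
    (b : EuclideanSpace ℝ (Fin m))
    (g : EuclideanSpace ℝ (Fin n) → ℝ)
    (hgconv : ConvexOn ℝ Set.univ g) (hglsc : LowerSemicontinuous g)
    (f : EuclideanSpace ℝ (Fin n) → ℝ)
    (hf : ∀ x, f x = (1/2) * ‖A x - b‖ ^ 2)
    (xstar ustar : EuclideanSpace ℝ (Fin n))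
    (hxstar_min : ∀ y, f xstar ≤ f y)
    (hsubgrad : ∀ x, g x ≥ g xstar +
      (inner ℝ (-(ContinuousLinearMap.adjoint A (A ustar))) (x - xstar) : ℝ)) :
    ∀ x, g x - g xstar ≥ -‖A ustar‖ * Real.sqrt (2 * (f x - f xstar)) :=
  stmt5_general n m A b g f hf xstar ustar hxstar_min hsubgrad
end

section
/- Let the PDHG iterates be given by y^{k+1} = y^k + σ(A x̄^k − b), x^{k+1} = prox_{τg}(x^k − τ Aᵀ y^{k+1}) with x̄^k = 2x^k − x^{k−1}, x̄^0 = x^0, and y^0 = 0. Define z^0 = x^0, z^1 = x^1, and z^k = (2x^k + x^{k−1} + ⋯ + x^1)/(k+1) for k ≥ 2. Then y^{k+1} = (k+1)σ(A z^k − b) for all k ≥ 0. -/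
/-!
The dual update only accumulates residuals, so `y^{k+1} = σ (A (x̄^0 + ⋯ + x̄^k) - (k+1) b)`.
The extrapolated points telescope, `x̄^0 + ⋯ + x̄^k = x^k + x^1 + ⋯ + x^k`, and this is exactly
`(k+1) z^k`.
-/

open Finset

section

variable {R E F 𝓕 : Type*} [CommRing R] [AddCommGroup E] [Module R E] [AddCommGroup F]
  [Module R F] [FunLike 𝓕 E F] [LinearMapClass 𝓕 R E F]

theorem eq_smul_sub_of_dual_step (A : 𝓕) (b : F) (σ : R) {xb : ℕ → E} {y : ℕ → F}
    (hy0 : y 0 = 0) (hyrec : ∀ k, y (k + 1) = y k + σ • (A (xb k) - b)) (k : ℕ) :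
    y k = σ • (A (∑ i ∈ range k, xb i) - (k : R) • b) := by
  induction k with
  | zero => simp [hy0]
  | succ k ih =>
    rw [hyrec, ih, sum_range_succ, map_add]
    push_cast
    module

theorem sum_range_extrapolate {x xb : ℕ → E} (hxb0 : xb 0 = x 0)
    (hxb : ∀ k, xb (k + 1) = (2 : R) • x (k + 1) - x k) (k : ℕ) :
    ∑ i ∈ range (k + 1), xb i = x k + ∑ i ∈ Icc 1 k, x i := by
  induction k with
  | zero => simp [hxb0]
  | succ k ih =>
    rw [sum_range_succ, ih, hxb, sum_Icc_succ_top (by omega)]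
    module

end

theorem succ_smul_ergodic_avg {𝕜 E : Type*} [Field 𝕜] [CharZero 𝕜] [AddCommGroup E]
    [Module 𝕜 E] {x z : ℕ → E} (hz0 : z 0 = x 0) (hz1 : z 1 = x 1)
    (hz : ∀ k : ℕ, 2 ≤ k →
      z k = ((k : 𝕜) + 1)⁻¹ • ((2 : 𝕜) • x k + ∑ i ∈ Icc 1 (k - 1), x i)) (k : ℕ) :
    ((k : 𝕜) + 1) • z k = x k + ∑ i ∈ Icc 1 k, x i := by
  match k with
  | 0 => simp [hz0]
  | 1 =>
    rw [hz1, Icc_self, sum_singleton]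
    push_cast
    module
  | k + 2 =>
    have hk : ((k + 2 : ℕ) : 𝕜) + 1 ≠ 0 := Nat.cast_add_one_ne_zero _
    rw [hz (k + 2) (by omega), smul_smul, mul_inv_cancel₀ hk, one_smul,
      show k + 2 - 1 = k + 1 from rfl, sum_Icc_succ_top (by omega : 1 ≤ k + 1 + 1)]
    module

theorem stmt11_general (n m : ℕ)
    (A : EuclideanSpace ℝ (Fin n) →L[ℝ] EuclideanSpace ℝ (Fin m))
    (b : EuclideanSpace ℝ (Fin m))
    (σ : ℝ)
    (x xb z : ℕ → EuclideanSpace ℝ (Fin n))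
    (y : ℕ → EuclideanSpace ℝ (Fin m))
    (hy0 : y 0 = 0)
    (hxb0 : xb 0 = x 0)
    (hxb : ∀ k : ℕ, xb (k+1) = (2 : ℝ) • x (k+1) - x k)
    (hyrec : ∀ k : ℕ, y (k+1) = y k + σ • (A (xb k) - b))
    (hz0 : z 0 = x 0) (hz1 : z 1 = x 1)
    (hz : ∀ k : ℕ, 2 ≤ k →
      z k = ((k : ℝ) + 1)⁻¹ • ((2 : ℝ) • x k + ∑ i ∈ Finset.Icc 1 (k-1), x i)) :
    ∀ k : ℕ, y (k+1) = (((k : ℝ) + 1) * σ) • (A (z k) - b) := by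
  intro k
  rw [eq_smul_sub_of_dual_step A b σ hy0 hyrec, sum_range_extrapolate hxb0 hxb,
    ← succ_smul_ergodic_avg hz0 hz1 hz, map_smul]
  push_cast
  module

/-- Identity (3.10): for PDHG iterates
`y^{k+1} = y^k + σ(Ax̄^k − b)`, `x^{k+1} = prox_{τg}(x^k − τAᵀy^{k+1})` with
`x̄^k = 2x^k − x^{k−1}`, `x̄^0 = x^0`, `y^0 = 0`, and
`z^0 = x^0`, `z^1 = x^1`, `z^k = (2x^k + x^{k−1} + ⋯ + x^1)/(k+1)` for `k ≥ 2`,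
one has `y^{k+1} = (k+1)σ(Az^k − b)` for all `k ≥ 0`. -/
theorem stmt11 (n m : ℕ)
    (A : EuclideanSpace ℝ (Fin n) →L[ℝ] EuclideanSpace ℝ (Fin m))
    (b : EuclideanSpace ℝ (Fin m))
    (g : EuclideanSpace ℝ (Fin n) → ℝ)
    (hgconv : ConvexOn ℝ Set.univ g) (hglsc : LowerSemicontinuous g)
    (σ τ : ℝ) (hσ : 0 < σ) (hτ : 0 < τ)
    (x xb z : ℕ → EuclideanSpace ℝ (Fin n))
    (y : ℕ → EuclideanSpace ℝ (Fin m))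
    (hy0 : y 0 = 0)
    (hxb0 : xb 0 = x 0)
    (hxb : ∀ k : ℕ, xb (k+1) = (2 : ℝ) • x (k+1) - x k)
    (hyrec : ∀ k : ℕ, y (k+1) = y k + σ • (A (xb k) - b))
    (hprox : ∀ k : ℕ, ∀ w,
      τ * g (x (k+1)) + (1/2) * ‖x (k+1) -
        (x k - τ • (ContinuousLinearMap.adjoint A (y (k+1))))‖ ^ 2
      ≤ τ * g w + (1/2) * ‖w -
        (x k - τ • (ContinuousLinearMap.adjoint A (y (k+1))))‖ ^ 2)
    (hz0 : z 0 = x 0) (hz1 : z 1 = x 1)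
    (hz : ∀ k : ℕ, 2 ≤ k →
      z k = ((k : ℝ) + 1)⁻¹ • ((2 : ℝ) • x k + ∑ i ∈ Finset.Icc 1 (k-1), x i)) :
    ∀ k : ℕ, y (k+1) = (((k : ℝ) + 1) * σ) • (A (z k) - b) :=
  stmt11_general n m A b σ x xb z y hy0 hxb0 hxb hyrec hz0 hz1 hz
end

section
/- Let h: ℝ^n → ℝ be convex with β-Lipschitz gradient, and let s^{k+1} = (x^{k+1} + k s^k)/(k+1). Then for any x̄ ∈ ℝ^n, ⟨∇h(x^k), x̄ − x^{k+1}⟩ ≤ k(h(s^k) − h(x̄)) − (k+1)(h(s^{k+1}) − h(x̄)) + (β/2)‖x^{k+1} − x^k‖². -/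
/-!
Split `⟪∇h(xᵏ), x̄ - xᵏ⁺¹⟫` as `⟪∇h(xᵏ), x̄ - xᵏ⟫ - ⟪∇h(xᵏ), xᵏ⁺¹ - xᵏ⟫`. Convexity bounds the first
term by `h(x̄) - h(xᵏ)`, the descent lemma bounds the second by
`h(xᵏ) - h(xᵏ⁺¹) + (β/2)‖xᵏ⁺¹ - xᵏ‖²`, and convexity along the running average `sᵏ⁺¹` trades
`h(xᵏ⁺¹)` for `k h(sᵏ) - (k+1) h(sᵏ⁺¹)`.
-/

open Set
open scoped RealInnerProductSpace

section

variable {F : Type*} [NormedAddCommGroup F] [InnerProductSpace ℝ F] [CompleteSpace F]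
  {f : F → ℝ} {f' : F → F}

lemma HasGradientAt.hasDerivAt_comp_line {g : F} {x v : F} {t : ℝ}
    (hf : HasGradientAt f g (x + t • v)) :
    HasDerivAt (fun s : ℝ => f (x + s • v)) ⟪g, v⟫ t := by
  have hline : HasDerivAt (fun s : ℝ => x + s • v) v t := by
    simpa using ((hasDerivAt_id t).smul_const v).const_add x
  exact (hasGradientAt_iff_hasFDerivAt.mp hf).comp_hasDerivAt t hline

lemma ConvexOn.inner_gradient_le_sub {s : Set F} (hconv : ConvexOn ℝ s f) {g x y : F}
    (hx : x ∈ s) (hy : y ∈ s) (hf : HasGradientAt f g x) :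
    ⟪g, y - x⟫ ≤ f y - f x := by
  have hseg : ConvexOn ℝ (Icc 0 1) (fun t : ℝ => f (x + t • (y - x))) := by
    refine ((hconv.comp_affineMap (AffineMap.lineMap x y)).subset ?_ (convex_Icc 0 1)).congr ?_
    · intro t ht
      exact hconv.1.lineMap_mem hx hy ⟨ht.1, ht.2⟩
    · intro t _
      simp [AffineMap.lineMap_apply, add_comm]
  have hderiv := HasGradientAt.hasDerivAt_comp_line (t := 0) (v := y - x) (by simpa using hf)
  simpa [slope] using hseg.le_slope_of_hasDerivAt (by simp) (by simp) zero_lt_one hderiv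

lemma le_add_inner_add_half_mul_sq_norm_of_hasGradientAt {β : ℝ}
    (hf : ∀ p, HasGradientAt f (f' p) p) {x : F}
    (hlip : ∀ p, ‖f' p - f' x‖ ≤ β * ‖p - x‖) (y : F) :
    f y ≤ f x + ⟪f' x, y - x⟫ + β / 2 * ‖y - x‖ ^ 2 := by
  set v := y - x
  have hderiv (t : ℝ) : HasDerivAt (fun s : ℝ => f (x + s • v)) ⟪f' (x + t • v), v⟫ t :=
    (hf _).hasDerivAt_comp_line
  have hbound (t : ℝ) (ht : t ∈ Ico (0 : ℝ) 1) :
      ⟪f' (x + t • v), v⟫ ≤ ⟪f' x, v⟫ + β * t * ‖v‖ ^ 2 := by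
    have hinc : ⟪f' (x + t • v) - f' x, v⟫ ≤ ‖f' (x + t • v) - f' x‖ * ‖v‖ :=
      real_inner_le_norm _ _
    have hlipt : ‖f' (x + t • v) - f' x‖ ≤ β * (t * ‖v‖) := by
      simpa [norm_smul, abs_of_nonneg ht.1] using hlip (x + t • v)
    rw [inner_sub_left] at hinc
    nlinarith [norm_nonneg v]
  have hquadratic (t : ℝ) :
      HasDerivAt (fun s : ℝ => f x + s * ⟪f' x, v⟫ + β / 2 * s ^ 2 * ‖v‖ ^ 2)
        (⟪f' x, v⟫ + β * t * ‖v‖ ^ 2) t := by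
    refine ((((hasDerivAt_id t).mul_const ⟪f' x, v⟫).const_add (f x)).add
      (((hasDerivAt_pow 2 t).const_mul (β / 2)).mul_const (‖v‖ ^ 2))).congr_deriv ?_
    norm_num only; ring
  have hcompare := image_le_of_deriv_right_le_deriv_boundary
    (fun t _ => (hderiv t).continuousAt.continuousWithinAt)
    (fun t _ => (hderiv t).hasDerivWithinAt) (by simp)
    (fun t _ => (hquadratic t).continuousAt.continuousWithinAt)
    (fun t _ => (hquadratic t).hasDerivWithinAt) hbound (right_mem_Icc.mpr zero_le_one)
  simpa [v] using hcompare

end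

lemma ConvexOn.add_one_mul_map_average_le {E : Type*} [AddCommGroup E] [Module ℝ E]
    {f : E → ℝ} {s : Set E} (hconv : ConvexOn ℝ s f) {x y : E} (hx : x ∈ s) (hy : y ∈ s)
    {a : ℝ} (ha : 0 ≤ a) :
    (a + 1) * f ((a + 1)⁻¹ • (x + a • y)) ≤ f x + a * f y := by
  have ha1 : 0 < a + 1 := by positivity
  have hcomb := hconv.2 hx hy (inv_nonneg.mpr ha1.le) (div_nonneg ha ha1.le)
    (by field_simp; ring)
  have haverage : (a + 1)⁻¹ • (x + a • y) = (a + 1)⁻¹ • x + (a / (a + 1)) • y := by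
    rw [smul_add, smul_smul, div_eq_inv_mul]
  calc (a + 1) * f ((a + 1)⁻¹ • (x + a • y))
      ≤ (a + 1) * ((a + 1)⁻¹ * f x + a / (a + 1) * f y) := by
        rw [haverage]; exact mul_le_mul_of_nonneg_left hcomb ha1.le
    _ = f x + a * f y := by field_simp

theorem stmt12_general (n : ℕ) (β : ℝ)
    (h : EuclideanSpace ℝ (Fin n) → ℝ)
    (h' : EuclideanSpace ℝ (Fin n) → EuclideanSpace ℝ (Fin n))
    (hconv : ConvexOn ℝ Set.univ h)
    (hgrad : ∀ p, HasGradientAt h (h' p) p)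
    (hlip : ∀ u v, ‖h' u - h' v‖ ≤ β * ‖u - v‖)
    (k : ℕ) (xk x1 sk s1 xbar : EuclideanSpace ℝ (Fin n))
    (hs1 : s1 = ((k : ℝ) + 1)⁻¹ • (x1 + (k : ℝ) • sk)) :
    (inner ℝ (h' xk) (xbar - x1) : ℝ)
      ≤ (k : ℝ) * (h sk - h xbar) - ((k : ℝ) + 1) * (h s1 - h xbar)
        + β / 2 * ‖x1 - xk‖ ^ 2 := by
  have hsupport : ⟪h' xk, xbar - xk⟫ ≤ h xbar - h xk :=
    hconv.inner_gradient_le_sub trivial trivial (hgrad xk)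
  have hdescent : h x1 ≤ h xk + ⟪h' xk, x1 - xk⟫ + β / 2 * ‖x1 - xk‖ ^ 2 :=
    le_add_inner_add_half_mul_sq_norm_of_hasGradientAt hgrad (fun p => hlip p xk) x1
  have haverage : ((k : ℝ) + 1) * h s1 ≤ h x1 + k * h sk :=
    hs1 ▸ hconv.add_one_mul_map_average_le trivial trivial k.cast_nonneg
  have hsplit : ⟪h' xk, xbar - x1⟫ = ⟪h' xk, xbar - xk⟫ - ⟪h' xk, x1 - xk⟫ := by
    rw [← inner_sub_right, sub_sub_sub_cancel_right]
  linarith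

/-- Estimate (4.4): for convex `h` with β-Lipschitz gradient and
`s^{k+1} = (x^{k+1} + k s^k)/(k+1)`, for any `x̄`,
`⟨∇h(x^k), x̄ − x^{k+1}⟩ ≤ k(h(s^k) − h(x̄)) − (k+1)(h(s^{k+1}) − h(x̄))
  + (β/2)‖x^{k+1} − x^k‖²`. -/
theorem stmt12 (n : ℕ) (β : ℝ) (hβ : 0 ≤ β)
    (h : EuclideanSpace ℝ (Fin n) → ℝ)
    (h' : EuclideanSpace ℝ (Fin n) → EuclideanSpace ℝ (Fin n))
    (hconv : ConvexOn ℝ Set.univ h)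
    (hgrad : ∀ p, HasGradientAt h (h' p) p)
    (hlip : ∀ u v, ‖h' u - h' v‖ ≤ β * ‖u - v‖)
    (k : ℕ) (xk x1 sk s1 xbar : EuclideanSpace ℝ (Fin n))
    (hs1 : s1 = ((k : ℝ) + 1)⁻¹ • (x1 + (k : ℝ) • sk)) :
    (inner ℝ (h' xk) (xbar - x1) : ℝ)
      ≤ (k : ℝ) * (h sk - h xbar) - ((k : ℝ) + 1) * (h s1 - h xbar)
        + β / 2 * ‖x1 - xk‖ ^ 2 :=
  stmt12_general n β h h' hconv hgrad hlip k xk x1 sk s1 xbar hs1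
end

section
/- Define τ_0 = 1 and τ_{k+1} = τ_k / √(1 + τ_k). Then for all k ≥ 0, 2/(k+2) ≤ τ_k ≤ 3/(k+2). -/
/-! Passing to `σ_k = 1/τ_k` turns the recursion into `σ_{k+1}² = σ_k² + σ_k`.
Since `σ ↦ σ² + σ` is increasing for `σ ≥ 0`, the bounds `(k+2)/3 ≤ σ_k ≤ (k+2)/2` propagate
by induction, because `(k+2)(k+5) ≥ (k+3)² ≥ (k+2)(k+4)`. -/

lemma inv_div_sqrt_one_add {t : ℝ} (ht : 0 < t) :
    (t / √(1 + t))⁻¹ = √(t⁻¹ ^ 2 + t⁻¹) := by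
  have h : t⁻¹ ^ 2 + t⁻¹ = (1 + t) / t ^ 2 := by field_simp
  rw [h, Real.sqrt_div' _ (sq_nonneg t), Real.sqrt_sq ht.le, inv_div]

lemma le_sqrt_sq_add_self {a σ : ℝ} (ha : 1 ≤ a) (h : a / 3 ≤ σ) :
    (a + 1) / 3 ≤ √(σ ^ 2 + σ) :=
  Real.le_sqrt_of_sq_le (by nlinarith)

lemma sqrt_sq_add_self_le {a σ : ℝ} (hσ : 0 ≤ σ) (h : σ ≤ a / 2) :
    √(σ ^ 2 + σ) ≤ (a + 1) / 2 :=
  Real.sqrt_le_iff.mpr ⟨by linarith, by nlinarith⟩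

lemma inv_bounds_of_div_sqrt_one_add (τ : ℕ → ℝ) (h0 : τ 0 = 1)
    (hrec : ∀ k : ℕ, τ (k + 1) = τ k / √(1 + τ k)) (k : ℕ) :
    ((k : ℝ) + 2) / 3 ≤ (τ k)⁻¹ ∧ (τ k)⁻¹ ≤ ((k : ℝ) + 2) / 2 := by
  induction k with
  | zero => norm_num [h0]
  | succ k ih =>
    obtain ⟨hlo, hhi⟩ := ih
    have hσ : 0 < (τ k)⁻¹ := lt_of_lt_of_le (by positivity) hlo
    rw [hrec, inv_div_sqrt_one_add (inv_pos.mp hσ)]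
    push_cast
    rw [add_right_comm]
    exact ⟨le_sqrt_sq_add_self (by linarith [k.cast_nonneg (α := ℝ)]) hlo,
      sqrt_sq_add_self_le hσ.le hhi⟩

/-- Stepsize bounds for the accelerated PDHG: if `τ₀ = 1` and
`τ_{k+1} = τ_k/√(1 + τ_k)`, then `2/(k+2) ≤ τ_k ≤ 3/(k+2)` for all `k`. -/
theorem stmt13 (τ : ℕ → ℝ) (h0 : τ 0 = 1)
    (hrec : ∀ k : ℕ, τ (k+1) = τ k / Real.sqrt (1 + τ k)) :
    ∀ k : ℕ, 2 / ((k : ℝ) + 2) ≤ τ k ∧ τ k ≤ 3 / ((k : ℝ) + 2) := by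
  intro k
  obtain ⟨hlo, hhi⟩ := inv_bounds_of_div_sqrt_one_add τ h0 hrec k
  have hσ : 0 < (τ k)⁻¹ := lt_of_lt_of_le (by positivity) hlo
  rw [← inv_inv (τ k), ← inv_div _ 2, ← inv_div _ 3]
  exact ⟨inv_anti₀ hσ hhi, inv_anti₀ (by positivity) hlo⟩
end

section
/- In the accelerated primal scheme for 1-strongly convex g with λ‖A‖² ≤ 1 and τ_0 = 1, the iterates satisfy (σ_k/(2τ_k))‖x^k − x̄‖² + Σ_{k−1}(F_k(s^k) − g_*) + Σ_{i=0}^{k−1} σ_i²(f(x^i) − f_*) ≤ (σ_0/(2τ_0))‖x^0 − x̄‖², where F_k(x) = g(x) + Σ_{k−1}(f(x) − f_*); in particular F_k(s^k) − g_* ≤ 3‖x^0 − x̄‖²/((k+3)k) = O(1/k²). -/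
/-!
The energy `E_k = (σ_k/(2τ_k))‖x^k − x̄‖² + Σ_{k−1}(g(s^k) − g_*) + Σ_{k−1}²(f(s^k) − f_*)`
drops by at least `σ_k²(f(x^k) − f_*)` in each step. Since `x̄` minimises `f`, `Aᵀ(Ax̄ − b) = 0`,
so `f − f_*` is the quadratic `½‖A(· − x̄)‖²`, and its contributions cancel exactly up to
`½σ_k²‖A(x^{k+1} − x^k)‖²`, which `λ‖A‖² ≤ 1` absorbs into the proximal term
`(σ_k/(2τ_k))‖x^{k+1} − x^k‖²`. The `g`-terms are controlled by Jensen along the average `s^{k+1}`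
and by the `(1 + τ_k)`-strong convexity of the prox objective, which is exactly the growth
`σ_{k+1}/τ_{k+1} = (1 + τ_k) σ_k/τ_k` of the weights. Finally `1/τ_k ≥ (k + 3)/3`, so
`Σ_{k−1} ≥ λk(k + 3)/6`, which turns the energy bound into the `O(1/k²)` rate.
-/

open Set Filter Topology Finset RealInnerProductSpace

section Convexity

variable {E : Type*} [NormedAddCommGroup E] [InnerProductSpace ℝ E]

theorem StrongConvexOn.add_sq_norm_sub_le_of_isMinOn {Φ : E → ℝ} {m : ℝ}
    (hΦ : StrongConvexOn univ m Φ) {x₀ : E} (hmin : IsMinOn Φ univ x₀) (y : E) :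
    Φ x₀ + m / 2 * ‖y - x₀‖ ^ 2 ≤ Φ y := by
  have hsmall : ∀ t : ℝ, 0 < t → t ≤ 1 → Φ x₀ + (1 - t) * (m / 2 * ‖y - x₀‖ ^ 2) ≤ Φ y := by
    intro t ht0 ht1
    have hconv := hΦ.2 (mem_univ y) (mem_univ x₀) ht0.le (sub_nonneg.2 ht1) (add_sub_cancel t 1)
    have hle : Φ x₀ ≤ Φ (t • y + (1 - t) • x₀) := hmin (mem_univ _)
    simp only [smul_eq_mul] at hconv
    refine le_of_mul_le_mul_left ?_ ht0
    linarith
  have hlim : Tendsto (fun t : ℝ => Φ x₀ + (1 - t) * (m / 2 * ‖y - x₀‖ ^ 2)) (𝓝[>] 0)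
      (𝓝 (Φ x₀ + m / 2 * ‖y - x₀‖ ^ 2)) := by
    have : Continuous (fun t : ℝ => Φ x₀ + (1 - t) * (m / 2 * ‖y - x₀‖ ^ 2)) := by fun_prop
    simpa using (this.tendsto 0).mono_left nhdsWithin_le_nhds
  refine le_of_tendsto hlim ?_
  filter_upwards [Ioc_mem_nhdsGT (zero_lt_one' ℝ)] with t ht using hsmall t ht.1 ht.2

theorem StrongConvexOn.smul_add_half_sq_norm_sub {g : E → ℝ} {m τ : ℝ}
    (hg : StrongConvexOn univ m g) (hτ : 0 ≤ τ) (w : E) :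
    StrongConvexOn univ (τ * m + 1) (fun y => τ * g y + 1 / 2 * ‖y - w‖ ^ 2) := by
  rw [strongConvexOn_iff_convex] at hg ⊢
  have hlin := ((innerₛₗ ℝ (-w)).convexOn convex_univ).add_const (1 / 2 * ‖w‖ ^ 2)
  refine ((hg.smul hτ).add hlin).congr fun y _ => ?_
  simp only [Pi.add_apply, smul_eq_mul, innerₛₗ_apply_apply, inner_neg_left]
  rw [norm_sub_sq_real, real_inner_comm]
  ring

theorem StrongConvexOn.prox_inequality {g : E → ℝ} {m τ : ℝ} (hg : StrongConvexOn univ m g)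
    (hτ : 0 ≤ τ) {x x' d : E}
    (hx' : ∀ y, τ * g x' + 1 / 2 * ‖x' - (x - τ • d)‖ ^ 2 ≤ τ * g y + 1 / 2 * ‖y - (x - τ • d)‖ ^ 2)
    (y : E) :
    τ * (g x' - g y) + τ * ⟪d, x' - y⟫ + 1 / 2 * ‖x' - x‖ ^ 2 + (τ * m + 1) / 2 * ‖x' - y‖ ^ 2
      ≤ 1 / 2 * ‖x - y‖ ^ 2 := by
  have h := (hg.smul_add_half_sq_norm_sub hτ (x - τ • d)).add_sq_norm_sub_le_of_isMinOn
    (fun y _ => hx' y) y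
  have hexpand : ∀ p,
      ‖p - (x - τ • d)‖ ^ 2 = ‖p - x‖ ^ 2 + 2 * τ * ⟪d, p - x⟫ + τ ^ 2 * ‖d‖ ^ 2 := by
    intro p
    rw [show p - (x - τ • d) = (p - x) + τ • d by abel, norm_add_sq_real, norm_smul,
      real_inner_smul_right, real_inner_comm, Real.norm_eq_abs, mul_pow, sq_abs]
    ring
  have hinner : ⟪d, x' - y⟫ = ⟪d, x' - x⟫ - ⟪d, y - x⟫ := by
    rw [← inner_sub_right, sub_sub_sub_cancel_right]
  simp only [hexpand] at h
  rw [norm_sub_rev y x', norm_sub_rev y x] at h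
  rw [hinner]
  linarith

theorem ConvexOn.mul_map_inv_smul_add_le {g : E → ℝ} (hg : ConvexOn ℝ univ g) {a b : ℝ}
    (ha : 0 ≤ a) (hb : 0 ≤ b) (hab : 0 < a + b) (x y : E) :
    (a + b) * g ((a + b)⁻¹ • (a • x + b • y)) ≤ a * g x + b * g y := by
  have h := hg.2 (mem_univ x) (mem_univ y) (div_nonneg ha hab.le) (div_nonneg hb hab.le)
    (by rw [← add_div, div_self hab.ne'])
  rw [smul_add, smul_smul, smul_smul, ← div_eq_inv_mul, ← div_eq_inv_mul]
  calc (a + b) * g ((a / (a + b)) • x + (b / (a + b)) • y)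
      ≤ (a + b) * ((a / (a + b)) • g x + (b / (a + b)) • g y) := by gcongr
    _ = a * g x + b * g y := by simp only [smul_eq_mul]; field_simp

end Convexity

section LeastSquares

variable {E F : Type*} [NormedAddCommGroup E] [InnerProductSpace ℝ E]
  [NormedAddCommGroup F] [InnerProductSpace ℝ F]

theorem IsLocalMin.inner_sub_apply_eq_zero {A : E →L[ℝ] F} {b : F} {x₀ : E}
    (hmin : IsLocalMin (fun y => ‖A y - b‖ ^ 2) x₀) (v : E) : ⟪A x₀ - b, A v⟫ = 0 := by
  have hderiv : HasFDerivAt (fun y => ‖A y - b‖ ^ 2) (2 • (innerSL ℝ (A x₀ - b)).comp A) x₀ :=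
    (A.hasFDerivAt.sub_const b).norm_sq
  simpa [inner_sub_left] using congrArg (fun L => L v) (hmin.hasFDerivAt_eq_zero hderiv)

theorem norm_smul_add_smul_sq_sub_inner (σ S : ℝ) (a a' c : F) :
    ‖σ • a' + S • c‖ ^ 2 + σ ^ 2 * ‖a‖ ^ 2 - S ^ 2 * ‖c‖ ^ 2 - 2 * σ * ⟪σ • a + S • c, a'⟫
      = σ ^ 2 * ‖a' - a‖ ^ 2 := by
  rw [norm_add_sq_real, norm_sub_sq_real, norm_smul, norm_smul, inner_add_left,
    real_inner_smul_left, real_inner_smul_left, real_inner_smul_left, real_inner_smul_right,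
    Real.norm_eq_abs, Real.norm_eq_abs, mul_pow, mul_pow, sq_abs, sq_abs, real_inner_comm c a',
    real_inner_comm a a']
  ring

theorem ContinuousLinearMap.mul_sq_norm_apply_le (A : E →L[ℝ] F) {c : ℝ} (hc0 : 0 ≤ c)
    (hc : c * ‖A‖ ^ 2 ≤ 1) (v : E) : c * ‖A v‖ ^ 2 ≤ ‖v‖ ^ 2 :=
  calc c * ‖A v‖ ^ 2 ≤ c * (‖A‖ ^ 2 * ‖v‖ ^ 2) := by
        rw [← mul_pow]; gcongr; exact A.le_opNorm v
    _ = c * ‖A‖ ^ 2 * ‖v‖ ^ 2 := by ring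
    _ ≤ ‖v‖ ^ 2 := mul_le_of_le_one_left (by positivity) hc

theorem norm_apply_sub_sq_eq_of_inner_eq_zero {A : E →L[ℝ] F} {b : F} {x₀ : E}
    (horth : ∀ v, ⟪A x₀ - b, A v⟫ = 0) (p : E) :
    ‖A p - b‖ ^ 2 = ‖A x₀ - b‖ ^ 2 + ‖A (p - x₀)‖ ^ 2 := by
  rw [show A p - b = (A x₀ - b) + A (p - x₀) by rw [map_sub]; abel, norm_add_sq_real, horth]
  ring

end LeastSquares

theorem smul_inv_smul_add_smul_sub {V : Type*} [AddCommGroup V] [Module ℝ V] {σ S S' : ℝ}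
    (hS' : S' = S + σ) (hne : S' ≠ 0) (u s v : V) :
    S' • (S'⁻¹ • (σ • u + S • s) - v) = σ • (u - v) + S • (s - v) := by
  rw [smul_sub, smul_smul, mul_inv_cancel₀ hne, one_smul, hS']
  module

section EnergyStep

variable {E F : Type*} [NormedAddCommGroup E] [InnerProductSpace ℝ E] [CompleteSpace E]
  [NormedAddCommGroup F] [InnerProductSpace ℝ F] [CompleteSpace F]

theorem accel_energy_descent {A : E →L[ℝ] F} {b : F} {g : E → ℝ} {xbar : E}
    (hg : StrongConvexOn univ 1 g) (horth : ∀ v, ⟪A xbar - b, A v⟫ = 0)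
    {τ σ S S' : ℝ} (hτ : 0 < τ) (hσ : 0 < σ) (hS : 0 ≤ S) (hS' : S' = S + σ)
    (hA : τ * σ * ‖A‖ ^ 2 ≤ 1) {x x' s z s' : E}
    (hz : z = S'⁻¹ • (σ • x + S • s)) (hs' : s' = S'⁻¹ • (σ • x' + S • s))
    (hprox : ∀ y, τ * g x' + 1 / 2 * ‖x' - (x - (τ * S') • A.adjoint (A z - b))‖ ^ 2
       ≤ τ * g y + 1 / 2 * ‖y - (x - (τ * S') • A.adjoint (A z - b))‖ ^ 2) :
    σ / (2 * τ) * (1 + τ) * ‖x' - xbar‖ ^ 2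
        + S' * ((g s' + S' * (1 / 2 * ‖A (s' - xbar)‖ ^ 2)) - g xbar)
        + σ ^ 2 * (1 / 2 * ‖A (x - xbar)‖ ^ 2)
      ≤ σ / (2 * τ) * ‖x - xbar‖ ^ 2 + S * ((g s + S * (1 / 2 * ‖A (s - xbar)‖ ^ 2)) - g xbar) := by
  have hS'pos : 0 < S' := by linarith
  have hcentered := fun u => smul_inv_smul_add_smul_sub hS' hS'pos.ne' u s xbar
  set a := A (x - xbar)
  set a' := A (x' - xbar)
  set c := A (s - xbar)
  have hprox' := hg.prox_inequality hτ.le (d := S' • A.adjoint (A z - b))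
    (by simpa only [mul_smul] using hprox) xbar
  have hinner : ⟪S' • A.adjoint (A z - b), x' - xbar⟫ = ⟪σ • a + S • c, a'⟫ := by
    rw [real_inner_smul_left, ContinuousLinearMap.adjoint_inner_left,
      show A z - b = A (z - xbar) + (A xbar - b) by rw [map_sub]; abel, inner_add_left, horth,
      add_zero, ← real_inner_smul_left, ← map_smul, hz, hcentered, map_add, map_smul, map_smul]
  have hjensen : S' * g s' ≤ σ * g x' + S * g s := by
    rw [hs', hS', add_comm S σ]
    exact (hg.convexOn (fun r => by positivity)).mul_map_inv_smul_add_le hσ.le hS (by linarith) x' s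
  have hnorm : S' ^ 2 * ‖A (s' - xbar)‖ ^ 2 = ‖σ • a' + S • c‖ ^ 2 := by
    rw [← Real.norm_of_nonneg hS'pos.le, ← mul_pow, ← norm_smul, ← map_smul, hs', hcentered,
      map_add, map_smul, map_smul]
  have hidentity := norm_smul_add_smul_sq_sub_inner σ S a a' c
  have hop := A.mul_sq_norm_apply_le (by positivity) hA (x' - x)
  rw [show A (x' - x) = a' - a by rw [← map_sub, sub_sub_sub_cancel_right]] at hop
  have hscaled : σ * (g x' - g xbar) + σ * ⟪σ • a + S • c, a'⟫ + σ / (2 * τ) * ‖x' - x‖ ^ 2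
      + σ / (2 * τ) * (1 + τ) * ‖x' - xbar‖ ^ 2 ≤ σ / (2 * τ) * ‖x - xbar‖ ^ 2 := by
    rw [hinner] at hprox'
    calc _ = σ / τ * (τ * (g x' - g xbar) + τ * ⟪σ • a + S • c, a'⟫ + 1 / 2 * ‖x' - x‖ ^ 2
          + (τ * 1 + 1) / 2 * ‖x' - xbar‖ ^ 2) := by field_simp; ring
      _ ≤ σ / τ * (1 / 2 * ‖x - xbar‖ ^ 2) := by gcongr
      _ = _ := by ring
  have hstep : σ ^ 2 * ‖a' - a‖ ^ 2 / 2 ≤ σ / (2 * τ) * ‖x' - x‖ ^ 2 :=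
    calc _ = σ / (2 * τ) * (τ * σ * ‖a' - a‖ ^ 2) := by field_simp
      _ ≤ _ := by gcongr
  have hsplit : S' * g xbar = S * g xbar + σ * g xbar := by rw [hS', add_mul]
  linarith

end EnergyStep

theorem le_div_of_mul_le_of_le {S F B c : ℝ} (hc : 0 < c) (hcS : c ≤ S) (hB : 0 ≤ B)
    (h : S * F ≤ B) : F ≤ B / c := by
  rw [le_div_iff₀ hc]
  rcases le_or_gt F 0 with hF | hF <;> nlinarith

section StepSizes

variable {τ : ℕ → ℝ}

theorem accelStep_pos (h0 : 0 < τ 0) (hrec : ∀ k, τ (k + 1) = τ k / √(1 + τ k)) (k : ℕ) :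
    0 < τ k := by
  induction k with
  | zero => exact h0
  | succ k ih => rw [hrec]; exact div_pos ih (Real.sqrt_pos.2 (by linarith))

theorem accelStep_sq_succ (h0 : 0 < τ 0) (hrec : ∀ k, τ (k + 1) = τ k / √(1 + τ k)) (k : ℕ) :
    τ (k + 1) ^ 2 = τ k ^ 2 / (1 + τ k) := by
  rw [hrec, div_pow, Real.sq_sqrt (by linarith [accelStep_pos h0 hrec k])]

theorem accelStep_weight_succ (h0 : 0 < τ 0) (hrec : ∀ k, τ (k + 1) = τ k / √(1 + τ k))
    (lam : ℝ) (k : ℕ) :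
    lam / τ (k + 1) / (2 * τ (k + 1)) = lam / τ k / (2 * τ k) * (1 + τ k) := by
  have hτ := accelStep_pos h0 hrec
  have hsq := accelStep_sq_succ h0 hrec k
  have : (0 : ℝ) < 1 + τ k := by linarith [hτ k]
  rw [div_div, div_div, ← mul_assoc, mul_comm _ 2, mul_assoc, ← sq, hsq]
  field_simp

theorem accelStep_mul_add_three_le (h0 : 0 < τ 0) (h1 : τ 0 ≤ 1)
    (hrec : ∀ k, τ (k + 1) = τ k / √(1 + τ k)) (k : ℕ) : τ k * (k + 3) ≤ 3 := by
  have hτ := accelStep_pos h0 hrec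
  induction k with
  | zero => norm_num; linarith
  | succ k ih =>
    have hτle : τ k ≤ 1 := by nlinarith [hτ k]
    -- `(τ k * (k + 4))² = (τ k * (k + 3) + τ k)² ≤ 9 + 7 τ k ≤ 9 (1 + τ k)`
    have hsq : (τ (k + 1) * (k + 4)) ^ 2 ≤ 3 ^ 2 := by
      rw [mul_pow, accelStep_sq_succ h0 hrec, div_mul_eq_mul_div, div_le_iff₀ (by linarith [hτ k])]
      have hu : 0 ≤ τ k * (k + 3) := by positivity [hτ k]
      nlinarith [mul_le_mul ih ih hu (by norm_num), mul_le_mul_of_nonneg_left ih (hτ k).le,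
        mul_le_mul_of_nonneg_left hτle (hτ k).le]
    push_cast
    linarith [le_of_pow_le_pow_left₀ two_ne_zero (by norm_num) hsq]

theorem mul_le_sum_div_accelStep (h0 : 0 < τ 0) (h1 : τ 0 ≤ 1)
    (hrec : ∀ k, τ (k + 1) = τ k / √(1 + τ k)) {lam : ℝ} (hlam : 0 ≤ lam) (k : ℕ) :
    lam * (k * (k + 3)) / 6 ≤ ∑ i ∈ range k, lam / τ i := by
  induction k with
  | zero => simp
  | succ k ih =>
    have hτ := accelStep_pos h0 hrec k
    have hterm : lam * (k + 3) / 3 ≤ lam / τ k := by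
      rw [le_div_iff₀ hτ]
      nlinarith [accelStep_mul_add_three_le h0 h1 hrec k]
    rw [sum_range_succ]
    push_cast
    nlinarith

theorem le_div_of_mul_sum_div_accelStep_le (h0 : 0 < τ 0) (h1 : τ 0 ≤ 1)
    (hrec : ∀ k, τ (k + 1) = τ k / √(1 + τ k)) {lam : ℝ} (hlam : 0 < lam) {k : ℕ} (hk : 1 ≤ k)
    {S F R : ℝ} (hS : ∑ i ∈ range k, lam / τ i ≤ S) (hR : 0 ≤ R) (h : S * F ≤ lam / 2 * R) :
    F ≤ 3 * R / ((k + 3) * k) := by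
  have hk' : (0 : ℝ) < k := by exact_mod_cast hk
  calc F ≤ lam / 2 * R / (lam * (k * (k + 3)) / 6) :=
        le_div_of_mul_le_of_le (by positivity)
          ((mul_le_sum_div_accelStep h0 h1 hrec hlam.le k).trans hS) (by positivity) h
    _ = _ := by field_simp; ring

end StepSizes

theorem add_sum_range_le_of_add_le {V u : ℕ → ℝ} (h : ∀ k, V (k + 1) + u k ≤ V k) (k : ℕ) :
    V k + ∑ i ∈ range k, u i ≤ V 0 := by
  induction k with
  | zero => simp
  | succ k ih => rw [sum_range_succ]; linarith [h k]

theorem stmt16_general (n m : ℕ)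
    (A : EuclideanSpace ℝ (Fin n) →L[ℝ] EuclideanSpace ℝ (Fin m))
    (b : EuclideanSpace ℝ (Fin m))
    (g : EuclideanSpace ℝ (Fin n) → ℝ)
    (hgstrong : ConvexOn ℝ Set.univ (fun x => g x - (1/2) * ‖x‖ ^ 2))
    (f : EuclideanSpace ℝ (Fin n) → ℝ)
    (hf : ∀ x, f x = (1/2) * ‖A x - b‖ ^ 2)
    (lam : ℝ) (hlam : 0 < lam) (hstep : lam * ‖A‖ ^ 2 ≤ 1)
    (τ σ Sig : ℕ → ℝ) (hτ0 : τ 0 = 1)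
    (hτrec : ∀ k : ℕ, τ (k+1) = τ k / Real.sqrt (1 + τ k))
    (hσ : ∀ k : ℕ, σ k = lam / τ k)
    (hSig : ∀ k : ℕ, Sig k = ∑ i ∈ Finset.range k, σ i)
    (x s z : ℕ → EuclideanSpace ℝ (Fin n))
    (hz : ∀ k : ℕ, z k = (Sig (k+1))⁻¹ • (σ k • x k + Sig k • s k))
    (hprox : ∀ k : ℕ, ∀ y,
      τ k * g (x (k+1)) + (1/2) * ‖x (k+1) -
        (x k - (τ k * Sig (k+1)) • (ContinuousLinearMap.adjoint A (A (z k) - b)))‖ ^ 2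
      ≤ τ k * g y + (1/2) * ‖y -
        (x k - (τ k * Sig (k+1)) • (ContinuousLinearMap.adjoint A (A (z k) - b)))‖ ^ 2)
    (hsrec : ∀ k : ℕ, s (k+1) = (Sig (k+1))⁻¹ • (σ k • x (k+1) + Sig k • s k))
    (xbar : EuclideanSpace ℝ (Fin n))
    (hxbar_f : ∀ y, f xbar ≤ f y) :
    (∀ k : ℕ,
      (σ k / (2 * τ k)) * ‖x k - xbar‖ ^ 2
        + Sig k * ((g (s k) + Sig k * (f (s k) - f xbar)) - g xbar)
        + ∑ i ∈ Finset.range k, (σ i) ^ 2 * (f (x i) - f xbar)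
      ≤ (σ 0 / (2 * τ 0)) * ‖x 0 - xbar‖ ^ 2)
    ∧ (∀ k : ℕ, 1 ≤ k →
      (g (s k) + Sig k * (f (s k) - f xbar)) - g xbar
        ≤ 3 * ‖x 0 - xbar‖ ^ 2 / (((k : ℝ) + 3) * (k : ℝ))) := by
  have hτ0pos : 0 < τ 0 := hτ0 ▸ one_pos
  have hτ := accelStep_pos hτ0pos hτrec
  have hσpos : ∀ k, 0 < σ k := fun k => hσ k ▸ div_pos hlam (hτ k)
  have hSig_succ : ∀ k, Sig (k + 1) = Sig k + σ k := fun k => by rw [hSig, hSig, sum_range_succ]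
  have hSig_nonneg : ∀ k, 0 ≤ Sig k := fun k => hSig k ▸ sum_nonneg fun i _ => (hσpos i).le
  have horth : ∀ v, ⟪A xbar - b, A v⟫ = 0 := IsLocalMin.inner_sub_apply_eq_zero <|
    Eventually.of_forall fun y => by linarith [hf xbar, hf y, hxbar_f y]
  have hgap : ∀ p, f p - f xbar = 1 / 2 * ‖A (p - xbar)‖ ^ 2 := fun p => by
    rw [hf, hf, norm_apply_sub_sq_eq_of_inner_eq_zero horth p]; ring
  let V : ℕ → ℝ := fun k => σ k / (2 * τ k) * ‖x k - xbar‖ ^ 2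
    + Sig k * ((g (s k) + Sig k * (f (s k) - f xbar)) - g xbar)
  have hdecrease : ∀ k, V (k + 1) + σ k ^ 2 * (f (x k) - f xbar) ≤ V k := fun k => by
    have hweight : σ (k + 1) / (2 * τ (k + 1)) = σ k / (2 * τ k) * (1 + τ k) := by
      rw [hσ, hσ, accelStep_weight_succ hτ0pos hτrec]
    have hA : τ k * σ k * ‖A‖ ^ 2 ≤ 1 := by rwa [hσ, mul_div_cancel₀ _ (hτ k).ne']
    simp only [V, hweight, hgap]
    exact accel_energy_descent (strongConvexOn_iff_convex.2 hgstrong) horth (hτ k) (hσpos k)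
      (hSig_nonneg k) (hSig_succ k) hA (hz k) (hsrec k) (hprox k)
  have henergy := add_sum_range_le_of_add_le (u := fun i => σ i ^ 2 * (f (x i) - f xbar)) hdecrease
  have hSig0 : Sig 0 = 0 := by rw [hSig, sum_range_zero]
  simp only [V, hSig0, zero_mul, add_zero] at henergy
  refine ⟨henergy, fun k hk => ?_⟩
  have hbound : Sig k * ((g (s k) + Sig k * (f (s k) - f xbar)) - g xbar)
      ≤ lam / 2 * ‖x 0 - xbar‖ ^ 2 := by
    have hfirst : 0 ≤ σ k / (2 * τ k) * ‖x k - xbar‖ ^ 2 := by positivity [hσpos k, hτ k]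
    have hsum : 0 ≤ ∑ i ∈ range k, σ i ^ 2 * (f (x i) - f xbar) :=
      sum_nonneg fun i _ => mul_nonneg (sq_nonneg _) (sub_nonneg.2 (hxbar_f _))
    have hweight0 : σ 0 / (2 * τ 0) = lam / 2 := by rw [hσ, hτ0]; ring
    linarith [hweight0 ▸ henergy k]
  exact le_div_of_mul_sum_div_accelStep_le hτ0pos hτ0.le hτrec hlam hk
    (by simp only [hSig, hσ, le_refl]) (by positivity) hbound

/-- Theorem 2, estimate (4.19)+(4.20): the accelerated primal scheme for
1-strongly convex `g`, with `λ‖A‖² ≤ 1`, `τ₀ = 1`, `τ_{k+1} = τ_k/√(1+τ_k)`,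
`σ_k = λ/τ_k`, `Σ_k = σ₀+⋯+σ_k` (here `Sig k = Σ_{k−1}`, `Sig 0 = 0`), satisfies
`(σ_k/(2τ_k))‖x^k − x̄‖² + Σ_{k−1}(F_k(s^k) − g_*) + Σᵢ σᵢ²(f(xⁱ) − f_*)
  ≤ (σ₀/(2τ₀))‖x⁰ − x̄‖²`, where `F_k(x) = g(x) + Σ_{k−1}(f(x) − f_*)`;
in particular `F_k(s^k) − g_* ≤ 3‖x⁰ − x̄‖²/((k+3)k)`. -/
theorem stmt16 (n m : ℕ)
    (A : EuclideanSpace ℝ (Fin n) →L[ℝ] EuclideanSpace ℝ (Fin m))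
    (b : EuclideanSpace ℝ (Fin m))
    (g : EuclideanSpace ℝ (Fin n) → ℝ)
    (hglsc : LowerSemicontinuous g)
    (hgstrong : ConvexOn ℝ Set.univ (fun x => g x - (1/2) * ‖x‖ ^ 2))
    (f : EuclideanSpace ℝ (Fin n) → ℝ)
    (hf : ∀ x, f x = (1/2) * ‖A x - b‖ ^ 2)
    (lam : ℝ) (hlam : 0 < lam) (hstep : lam * ‖A‖ ^ 2 ≤ 1)
    (τ σ Sig : ℕ → ℝ) (hτ0 : τ 0 = 1)
    (hτrec : ∀ k : ℕ, τ (k+1) = τ k / Real.sqrt (1 + τ k))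
    (hσ : ∀ k : ℕ, σ k = lam / τ k)
    (hSig : ∀ k : ℕ, Sig k = ∑ i ∈ Finset.range k, σ i)
    (x s z : ℕ → EuclideanSpace ℝ (Fin n))
    (hs0 : s 0 = x 0)
    (hz : ∀ k : ℕ, z k = (Sig (k+1))⁻¹ • (σ k • x k + Sig k • s k))
    (hprox : ∀ k : ℕ, ∀ y,
      τ k * g (x (k+1)) + (1/2) * ‖x (k+1) -
        (x k - (τ k * Sig (k+1)) • (ContinuousLinearMap.adjoint A (A (z k) - b)))‖ ^ 2
      ≤ τ k * g y + (1/2) * ‖y -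
        (x k - (τ k * Sig (k+1)) • (ContinuousLinearMap.adjoint A (A (z k) - b)))‖ ^ 2)
    (hsrec : ∀ k : ℕ, s (k+1) = (Sig (k+1))⁻¹ • (σ k • x (k+1) + Sig k • s k))
    (xbar : EuclideanSpace ℝ (Fin n))
    (hxbar_f : ∀ y, f xbar ≤ f y)
    (hxbar_g : ∀ y, (∀ w, f y ≤ f w) → g xbar ≤ g y) :
    (∀ k : ℕ,
      (σ k / (2 * τ k)) * ‖x k - xbar‖ ^ 2
        + Sig k * ((g (s k) + Sig k * (f (s k) - f xbar)) - g xbar)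
        + ∑ i ∈ Finset.range k, (σ i) ^ 2 * (f (x i) - f xbar)
      ≤ (σ 0 / (2 * τ 0)) * ‖x 0 - xbar‖ ^ 2)
    ∧ (∀ k : ℕ, 1 ≤ k →
      (g (s k) + Sig k * (f (s k) - f xbar)) - g xbar
        ≤ 3 * ‖x 0 - xbar‖ ^ 2 / (((k : ℝ) + 3) * (k : ℝ))) :=
  stmt16_general n m A b g hgstrong f hf lam hlam hstep τ σ Sig hτ0 hτrec hσ hSig x s z hz hprox
    hsrec xbar hxbar_f
end
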